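/- arXiv:1403.7724 — 4 statements merged into one kernel-verified Lean document; each statement's English description precedes it below -/
import Mathlib

section
/- Let h : ℤ → ℂ be finitely supported and not identically zero, and suppose its symbol h*(z) = Σ_{α∈ℤ} h(α) z^α factors as h*(z) = c·z^m·∏_{θ∈Θ} (z − θ^{−1})^{k_θ} for all z ∈ ℂ∖{0}, where c ∈ ℂ∖{0}, m ∈ ℤ, Θ ⊂ ℂ∖{0} is a finite set, and k_θ ≥ 1 for each θ ∈ Θ. Then a sequence c : ℤ → ℂ satisfies h * c = 0 if and only if there exist (necessarily unique) polynomials p_θ ∈ ℂ[x] with deg p_θ ≤ k_θ − 1 such that c(n) = Σ_{θ∈Θ} p_θ(n) θ^n for all n ∈ ℤ; that is, the kernel of the convolution operator c ↦ h*c is the direct sum ⊕_{θ∈Θ} e_θ·Π_{k_θ−1}. -/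
/-!
Let `S` be the backward shift `(S c)(n) = c(n - 1)` on sequences and
`Q = ∏_{θ ∈ Θ} (X - θ⁻¹)^{k_θ}`. Comparing symbols, `h * c` is `C · Q(S) c` up to a shift of
the index, so the kernel is `ker Q(S)`. The factors of `Q` are pairwise coprime, so `ker Q(S)` is
the sum of the generalized eigenspaces `ker (S - θ⁻¹)^{k_θ}`, and these are independent. Each of
them contains `e_θ · Π_{k_θ - 1}`, which has dimension `k_θ`, and has dimension at most `k_θ`,
because a solution of a linear recurrence of order `k` with nonzero constant coefficient is
determined by `k` consecutive values; hence the two coincide.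
-/

/-- Convolution `(h*c)(n) = Σ_m h(m) c(n−m)` of a finitely supported sequence `h` with an
arbitrary sequence `c` on `ℤ`. -/
noncomputable def conv1 (h : ℤ →₀ ℂ) (c : ℤ → ℂ) (n : ℤ) : ℂ :=
  h.sum fun m v => v * c (n - m)

open Polynomial Module.End
open scoped Function

lemma ker_aeval_X_sub_C_pow {R M : Type*} [CommRing R] [AddCommGroup M] [Module R M]
    (f : Module.End R M) (μ : R) (k : ℕ) :
    LinearMap.ker (aeval f ((X - Polynomial.C μ) ^ k)) = f.genEigenspace μ k := by
  rw [genEigenspace_nat, map_pow, map_sub, aeval_X, aeval_C, Algebra.algebraMap_eq_smul_one]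

lemma iSup_ker_aeval_eq_ker_aeval_prod {R M ι : Type*} [CommRing R] [AddCommGroup M] [Module R M]
    (f : Module.End R M) {s : Finset ι} {q : ι → R[X]}
    (hq : (s : Set ι).Pairwise (IsCoprime on q)) :
    ⨆ i ∈ s, LinearMap.ker (aeval f (q i)) = LinearMap.ker (aeval f (∏ i ∈ s, q i)) := by
  classical
  induction s using Finset.induction_on with
  | empty => simp [Module.End.one_eq_id]
  | insert a s has ih =>
    rw [Finset.coe_insert, Set.pairwise_insert] at hq
    rw [Finset.iSup_insert, Finset.prod_insert has, ih hq.1,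
      ← sup_ker_aeval_eq_ker_aeval_mul_of_coprime]
    exact IsCoprime.prod_right fun i hi => (hq.2 i hi (ne_of_mem_of_not_mem hi has).symm).1

lemma mem_degreeLT_iff_natDegree_le_pred {R : Type*} [Semiring R] {n : ℕ} (hn : 1 ≤ n)
    {p : R[X]} : p ∈ degreeLT R n ↔ p.natDegree ≤ n - 1 := by
  obtain ⟨n, rfl⟩ := Nat.exists_eq_add_of_le' hn
  rw [degreeLT_succ_eq_degreeLE, mem_degreeLE, natDegree_le_iff_degree_le, Nat.add_sub_cancel]

lemma taylor_sub_self_mem_degreeLT {R : Type*} [CommRing R] {k : ℕ} {p : R[X]}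
    (hp : p ∈ degreeLT R (k + 1)) (r : R) : taylor r p - p ∈ degreeLT R k := by
  rcases eq_or_ne p 0 with rfl | hp0
  · simp
  rw [mem_degreeLT] at hp ⊢
  have hlt := degree_sub_lt_left (degree_taylor p r) ((taylor_eq_zero r p).not.2 hp0)
    (leadingCoeff_taylor r p)
  rw [degree_taylor, degree_eq_natDegree hp0] at hlt
  rw [degree_eq_natDegree hp0, Nat.cast_lt] at hp
  exact hlt.trans_le (Nat.cast_le.2 (Nat.lt_succ_iff.1 hp))

variable {K : Type*} [Field K]

/-- The coefficient sequence of the Laurent polynomial `z ^ m * Q z`. -/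
noncomputable def shiftedCoeffs {R : Type*} [Semiring R] (m : ℤ) (Q : R[X]) : ℤ →₀ R :=
  ∑ j ∈ Finset.range (Q.natDegree + 1), Finsupp.single (m + j) (Q.coeff j)

lemma sum_shiftedCoeffs {R M : Type*} [Semiring R] [AddCommMonoid M] (m : ℤ) (Q : R[X])
    {g : ℤ → R → M} (h0 : ∀ a, g a 0 = 0) (hadd : ∀ a b₁ b₂, g a (b₁ + b₂) = g a b₁ + g a b₂) :
    (shiftedCoeffs m Q).sum g = ∑ j ∈ Finset.range (Q.natDegree + 1), g (m + j) (Q.coeff j) := by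
  rw [shiftedCoeffs, ← Finsupp.sum_finsetSum_index h0 hadd]
  exact Finset.sum_congr rfl fun j _ => Finsupp.sum_single_index (h0 _)

lemma sum_shiftedCoeffs_mul_zpow (m : ℤ) (Q : K[X]) {z : K} (hz : z ≠ 0) :
    (shiftedCoeffs m Q).sum (fun α v => v * z ^ α) = z ^ m * Q.eval z := by
  rw [sum_shiftedCoeffs m Q (g := fun α v => v * z ^ α) (fun _ => zero_mul _)
    (fun _ _ _ => add_mul _ _ _), eval_eq_sum_range, Finset.mul_sum]
  refine Finset.sum_congr rfl fun j _ => ?_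
  rw [zpow_add₀ hz, zpow_natCast]
  ring

lemma Finsupp.eq_zero_of_sum_mul_zpow_eq_zero [Infinite K] {h : ℤ →₀ K}
    (hz : ∀ z : K, z ≠ 0 → h.sum (fun α v => v * z ^ α) = 0) : h = 0 := by
  obtain ⟨N, hN⟩ : ∃ N : ℕ, ∀ α ∈ h.support, 0 ≤ α + N :=
    ⟨h.support.sup Int.natAbs, fun α hα => by have := Finset.le_sup (f := Int.natAbs) hα; omega⟩
  -- `z ^ N` times the symbol of `h` is a polynomial in `z`
  set P : K[X] := ∑ α ∈ h.support, monomial (α + N).toNat (h α)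
  have hP : P = 0 := by
    refine eq_zero_of_infinite_isRoot P ((Set.finite_singleton 0).infinite_compl.mono
      fun z (hz0 : z ≠ 0) => ?_)
    have hzN : P.eval z = h.sum (fun α v => v * z ^ α) * z ^ (N : ℤ) := by
      rw [eval_finsetSum, Finsupp.sum, Finset.sum_mul]
      refine Finset.sum_congr rfl fun α hα => ?_
      rw [eval_monomial, ← zpow_natCast, Int.toNat_of_nonneg (hN α hα), zpow_add₀ hz0, mul_assoc]
    simp [IsRoot, hzN, hz z hz0]
  ext α
  by_contra hα
  have hcoeff : P.coeff (α + N).toNat = h α := by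
    rw [finsetSum_coeff, Finset.sum_eq_single α]
    · rw [coeff_monomial, if_pos rfl]
    · intro β hβ hβα
      have := hN α (Finsupp.mem_support_iff.2 hα)
      have := hN β hβ
      rw [coeff_monomial, if_neg (by omega)]
    · exact fun h' => absurd (Finsupp.mem_support_iff.2 hα) h'
  exact hα (by simp [← hcoeff, hP])

lemma eq_smul_shiftedCoeffs_of_sum_mul_zpow_eq [Infinite K] {h : ℤ →₀ K} {C : K} {m : ℤ}
    {Q : K[X]} (hsym : ∀ z : K, z ≠ 0 → h.sum (fun α v => v * z ^ α) = C * z ^ m * Q.eval z) :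
    h = C • shiftedCoeffs m Q := by
  refine sub_eq_zero.1 (Finsupp.eq_zero_of_sum_mul_zpow_eq_zero fun z hz => ?_)
  rw [Finsupp.sum_sub_index (fun _ _ _ => sub_mul _ _ _),
    Finsupp.sum_smul_index (fun _ => zero_mul _), hsym z hz]
  simp only [mul_assoc, ← Finsupp.mul_sum, sum_shiftedCoeffs_mul_zpow m Q hz, sub_self]

variable (K) in
noncomputable def seqShift : Module.End K (ℤ → K) where
  toFun c n := c (n - 1)
  map_add' _ _ := rfl
  map_smul' _ _ := rfl

lemma seqShift_pow_apply (i : ℕ) (c : ℤ → K) (n : ℤ) : (seqShift K ^ i) c n = c (n - i) := by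
  induction i generalizing c n with
  | zero => simp
  | succ i ih =>
    rw [pow_succ, Module.End.mul_apply, ih]
    change c (n - i - 1) = _
    push_cast
    ring_nf

lemma aeval_seqShift_apply (Q : K[X]) (c : ℤ → K) (n : ℤ) :
    aeval (seqShift K) Q c n = ∑ i ∈ Finset.range (Q.natDegree + 1), Q.coeff i * c (n - i) := by
  simp [aeval_eq_sum_range, LinearMap.coe_sum, Finset.sum_apply, seqShift_pow_apply]

lemma eq_zero_of_aeval_seqShift_eq_zero {Q : K[X]} (hQ : Q.coeff 0 ≠ 0) {c : ℤ → K}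
    (hc : aeval (seqShift K) Q c = 0) (hwin : ∀ j : ℕ, j < Q.natDegree → c j = 0) : c = 0 := by
  set N := Q.natDegree
  have hrec (ν : ℤ) : ∑ i ∈ Finset.range (N + 1), Q.coeff i * c (ν - i) = 0 := by
    rw [← aeval_seqShift_apply, hc, Pi.zero_apply]
  -- the recurrence determines `c n` from the `N` values below it (as `Q.coeff 0 ≠ 0`)
  -- and from the `N` values above it (as `Q.coeff N ≠ 0`)
  have hup (n : ℤ) (h : ∀ i < N, c (n - (i + 1 : ℕ)) = 0) : c n = 0 := by
    have := hrec n
    rw [Finset.sum_range_succ', Finset.sum_eq_zero fun i hi => by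
      rw [h i (Finset.mem_range.1 hi), mul_zero]] at this
    simpa [hQ] using this
  have hdown (n : ℤ) (h : ∀ i < N, c (n + N - i) = 0) : c n = 0 := by
    have := hrec (n + N)
    rw [Finset.sum_range_succ, Finset.sum_eq_zero fun i hi => by
      rw [h i (Finset.mem_range.1 hi), mul_zero]] at this
    have hN : Q.coeff N ≠ 0 := leadingCoeff_ne_zero.2 fun h0 => hQ (by simp [h0])
    simpa [hN] using this
  have hgrow (M : ℕ) : ∀ n : ℤ, -M ≤ n → n < N + M → c n = 0 := by
    induction M with
    | zero =>
      intro n h0 hN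
      lift n to ℕ using by simpa using h0
      exact hwin n (by simpa using hN)
    | succ M ih =>
      intro n h0 hN
      rcases lt_or_ge n (N + M) with hlt | hge
      · rcases eq_or_lt_of_le h0 with rfl | hgt
        · exact hdown _ fun i hi => ih _ (by omega) (by omega)
        · exact ih n (by omega) hlt
      · exact hup n fun i hi => ih _ (by omega) (by omega)
  funext n
  exact hgrow (n.natAbs + 1) n (by omega) (by omega)

def restrictWindow (N : ℕ) : (ℤ → K) →ₗ[K] (Fin N → K) :=
  LinearMap.pi fun i => LinearMap.proj ((i : ℕ) : ℤ)

lemma injective_restrictWindow_ker_aeval_seqShift {Q : K[X]} (hQ : Q.coeff 0 ≠ 0) :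
    Function.Injective ((restrictWindow Q.natDegree).comp
      (LinearMap.ker (aeval (seqShift K) Q)).subtype) := by
  rw [← LinearMap.ker_eq_bot, LinearMap.ker_eq_bot']
  rintro ⟨c, hc⟩ hwin
  refine Subtype.ext (eq_zero_of_aeval_seqShift_eq_zero hQ hc fun j hj => ?_)
  exact congrFun hwin ⟨j, hj⟩

lemma finiteDimensional_ker_aeval_seqShift {Q : K[X]} (hQ : Q.coeff 0 ≠ 0) :
    FiniteDimensional K (LinearMap.ker (aeval (seqShift K) Q)) :=
  Module.Finite.of_injective _ (injective_restrictWindow_ker_aeval_seqShift hQ)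

lemma finrank_ker_aeval_seqShift_le {Q : K[X]} (hQ : Q.coeff 0 ≠ 0) :
    Module.finrank K (LinearMap.ker (aeval (seqShift K) Q)) ≤ Q.natDegree := by
  have := finiteDimensional_ker_aeval_seqShift hQ
  simpa using LinearMap.finrank_le_finrank_of_injective
    (injective_restrictWindow_ker_aeval_seqShift hQ)

def expPoly (θ : K) : K[X] →ₗ[K] (ℤ → K) where
  toFun p n := p.eval (n : K) * θ ^ n
  map_add' p q := by ext; simp [add_mul]
  map_smul' a p := by ext; simp [mul_assoc]

@[simp] lemma expPoly_apply (θ : K) (p : K[X]) (n : ℤ) : expPoly θ p n = p.eval (n : K) * θ ^ n :=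
  rfl

lemma seqShift_sub_smul_expPoly {θ : K} (hθ : θ ≠ 0) (p : K[X]) :
    (seqShift K - θ⁻¹ • 1) (expPoly θ p) = expPoly θ (θ⁻¹ • (taylor (-1) p - p)) := by
  ext n
  change p.eval ((n - 1 : ℤ) : K) * θ ^ (n - 1) - θ⁻¹ * (p.eval (n : K) * θ ^ n) = _
  rw [zpow_sub_one₀ hθ]
  simp only [expPoly_apply, eval_smul, eval_sub, taylor_eval, smul_eq_mul, ← sub_eq_add_neg]
  push_cast
  ring

lemma expPoly_mem_genEigenspace {θ : K} (hθ : θ ≠ 0) {k : ℕ} {p : K[X]}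
    (hp : p ∈ degreeLT K k) : expPoly θ p ∈ (seqShift K).genEigenspace θ⁻¹ k := by
  rw [mem_genEigenspace_nat, LinearMap.mem_ker]
  induction k generalizing p with
  | zero =>
    obtain rfl : p = 0 := by simpa [mem_degreeLT] using hp
    simp
  | succ k ih =>
    rw [pow_succ, Module.End.mul_apply, seqShift_sub_smul_expPoly hθ]
    exact ih (Submodule.smul_mem _ _ (taylor_sub_self_mem_degreeLT hp _))

section CharZero

variable [CharZero K]

lemma expPoly_injective {θ : K} (hθ : θ ≠ 0) : Function.Injective (expPoly θ) := by
  rw [← LinearMap.ker_eq_bot, LinearMap.ker_eq_bot']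
  intro p hp
  refine eq_zero_of_infinite_isRoot p ((Set.infinite_range_of_injective Int.cast_injective).mono ?_)
  rintro - ⟨n, rfl⟩
  simpa [hθ, zpow_ne_zero] using congrFun hp n

lemma genEigenspace_seqShift_inv {θ : K} (hθ : θ ≠ 0) (k : ℕ) :
    (seqShift K).genEigenspace θ⁻¹ k = (degreeLT K k).map (expPoly θ) := by
  have hQ : ((X - Polynomial.C θ⁻¹) ^ k).coeff 0 ≠ 0 := by
    simp [coeff_zero_eq_eval_zero, hθ]
  have hker := ker_aeval_X_sub_C_pow (seqShift K) θ⁻¹ k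
  have := finiteDimensional_ker_aeval_seqShift hQ
  rw [← hker]
  refine (Submodule.eq_of_le_of_finrank_le ?_ ?_).symm
  · rw [Submodule.map_le_iff_le_comap, hker]
    exact fun p hp => expPoly_mem_genEigenspace hθ hp
  · calc Module.finrank K (LinearMap.ker (aeval (seqShift K) ((X - Polynomial.C θ⁻¹) ^ k)))
        ≤ k := by simpa using finrank_ker_aeval_seqShift_le hQ
      _ = Module.finrank K ((degreeLT K k).map (expPoly θ)) := by
        rw [← ((degreeLT K k).equivMapOfInjective _ (expPoly_injective hθ)).finrank_eq,
          Module.finrank_eq_card_basis (degreeLT.basis K k), Fintype.card_fin]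

lemma aeval_seqShift_prod_eq_zero_iff {Θ : Finset K} (hΘ : ∀ θ ∈ Θ, θ ≠ 0) {k : K → ℕ}
    (hk : ∀ θ ∈ Θ, 1 ≤ k θ) (c : ℤ → K) :
    aeval (seqShift K) (∏ θ ∈ Θ, (X - Polynomial.C θ⁻¹) ^ k θ) c = 0 ↔
      ∃ p : K → K[X], (∀ θ ∈ Θ, (p θ).natDegree ≤ k θ - 1) ∧ c = ∑ θ ∈ Θ, expPoly θ (p θ) := by
  have hcop : (Θ : Set K).Pairwise (IsCoprime on fun θ => (X - Polynomial.C θ⁻¹) ^ k θ) :=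
    fun a _ b _ hab => (pairwise_coprime_X_sub_C inv_injective hab).pow
  have hker : ⨆ θ ∈ Θ, LinearMap.ker (aeval (seqShift K) ((X - Polynomial.C θ⁻¹) ^ k θ)) =
      ⨆ θ ∈ Θ, (degreeLT K (k θ)).map (expPoly θ) := by
    refine iSup_congr fun θ => iSup_congr fun hθ => ?_
    rw [ker_aeval_X_sub_C_pow, genEigenspace_seqShift_inv (hΘ θ hθ)]
  rw [← LinearMap.mem_ker, ← iSup_ker_aeval_eq_ker_aeval_prod _ hcop, hker]
  constructor
  · intro hc
    obtain ⟨μ, hμ⟩ := (Submodule.mem_iSup_finset_iff_exists_sum _ c).1 hc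
    choose p hp using fun θ => Submodule.mem_map.1 (μ θ).2
    refine ⟨p, fun θ hθ => (mem_degreeLT_iff_natDegree_le_pred (hk θ hθ)).1 (hp θ).1, ?_⟩
    rw [← hμ]
    exact Finset.sum_congr rfl fun θ _ => (hp θ).2.symm
  · rintro ⟨p, hp, rfl⟩
    exact Submodule.sum_mem_biSup fun θ hθ =>
      Submodule.mem_map_of_mem ((mem_degreeLT_iff_natDegree_le_pred (hk θ hθ)).2 (hp θ hθ))

lemma eq_of_sum_expPoly_eq {Θ : Finset K} (hΘ : ∀ θ ∈ Θ, θ ≠ 0) {p p' : K → K[X]}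
    (h : ∑ θ ∈ Θ, expPoly θ (p θ) = ∑ θ ∈ Θ, expPoly θ (p' θ)) : ∀ θ ∈ Θ, p θ = p' θ := by
  -- distinct `θ` give distinct eigenvalues `θ⁻¹` of the shift
  have hind : iSupIndep fun θ : K => (seqShift K).genEigenspace θ⁻¹ ⊤ :=
    (independent_genEigenspace (seqShift K) ⊤).comp inv_injective
  have hsum := (iSupIndep_iff_finsetSum_eq_zero_imp_eq_zero _).1 hind Θ
    (fun θ => expPoly θ (p θ - p' θ))
    (fun θ hθ => (genEigenspace _ _).monotone le_top (expPoly_mem_genEigenspace (hΘ θ hθ)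
      ((mem_degreeLT_iff_natDegree_le_pred le_add_self).2 le_rfl)))
    (by simp only [map_sub, Finset.sum_sub_distrib, h, sub_self])
  intro θ hθ
  exact sub_eq_zero.1 ((injective_iff_map_eq_zero _).1 (expPoly_injective (hΘ θ hθ)) _
    (hsum θ hθ))

end CharZero

lemma conv1_smul_shiftedCoeffs (C : ℂ) (m : ℤ) (Q : ℂ[X]) (c : ℤ → ℂ) (n : ℤ) :
    conv1 (C • shiftedCoeffs m Q) c n = C * aeval (seqShift ℂ) Q c (n - m) := by
  rw [conv1, Finsupp.sum_smul_index (fun _ => zero_mul _),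
    sum_shiftedCoeffs m Q (fun _ => by simp) (fun _ _ _ => by ring), aeval_seqShift_apply,
    Finset.mul_sum]
  refine Finset.sum_congr rfl fun j _ => ?_
  rw [sub_add_eq_sub_sub]
  ring

theorem stmt0_general (h : ℤ →₀ ℂ) (C : ℂ) (hC : C ≠ 0) (m : ℤ)
    (Θ : Finset ℂ) (hΘ : ∀ θ ∈ Θ, θ ≠ 0) (k : ℂ → ℕ) (hk : ∀ θ ∈ Θ, 1 ≤ k θ)
    (hfac : ∀ z : ℂ, z ≠ 0 →
      (h.sum fun α v => v * z ^ α) = C * z ^ m * ∏ θ ∈ Θ, (z - θ⁻¹) ^ k θ) :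
    ∀ c : ℤ → ℂ,
      ((∀ n : ℤ, conv1 h c n = 0) ↔
        ∃ p : ℂ → Polynomial ℂ,
          (∀ θ ∈ Θ, (p θ).natDegree ≤ k θ - 1) ∧
          ∀ n : ℤ, c n = ∑ θ ∈ Θ, (p θ).eval (n : ℂ) * θ ^ n) ∧
      ∀ p p' : ℂ → Polynomial ℂ,
        (∀ θ ∈ Θ, (p θ).natDegree ≤ k θ - 1) →
        (∀ θ ∈ Θ, (p' θ).natDegree ≤ k θ - 1) →
        (∀ n : ℤ,
          (∑ θ ∈ Θ, (p θ).eval (n : ℂ) * θ ^ n) = ∑ θ ∈ Θ, (p' θ).eval (n : ℂ) * θ ^ n) →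
        ∀ θ ∈ Θ, p θ = p' θ := by
  set Q := ∏ θ ∈ Θ, (X - Polynomial.C θ⁻¹) ^ k θ
  have hh : h = C • shiftedCoeffs m Q :=
    eq_smul_shiftedCoeffs_of_sum_mul_zpow_eq fun z hz => by simp [Q, hfac z hz, eval_prod]
  intro c
  refine ⟨?_, fun p p' _ _ hpp' => eq_of_sum_expPoly_eq hΘ (funext fun n => by simpa using hpp' n)⟩
  calc (∀ n, conv1 h c n = 0) ↔ aeval (seqShift ℂ) Q c = 0 := by
        simp only [hh, conv1_smul_shiftedCoeffs, mul_eq_zero, hC, false_or, funext_iff]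
        exact ⟨fun hc n => by simpa using hc (n + m), fun hc n => hc _⟩
    _ ↔ _ := aeval_seqShift_prod_eq_zero_iff hΘ hk c
    _ ↔ _ := by simp [funext_iff, Finset.sum_apply]

/-- univariate kernel theorem: if the symbol of a nonzero, finitely
supported `h : ℤ → ℂ` factors as `h*(z) = C·z^m·∏_{θ∈Θ}(z − θ⁻¹)^{k_θ}`, then `h*c = 0`
if and only if `c(n) = Σ_{θ∈Θ} p_θ(n) θ^n` for (necessarily unique) polynomials `p_θ` of
degree at most `k_θ − 1`; i.e. `ker(h*·) = ⊕_{θ∈Θ} e_θ·Π_{k_θ−1}`. -/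
theorem stmt0 (h : ℤ →₀ ℂ) (hne : h ≠ 0) (C : ℂ) (hC : C ≠ 0) (m : ℤ)
    (Θ : Finset ℂ) (hΘ : ∀ θ ∈ Θ, θ ≠ 0) (k : ℂ → ℕ) (hk : ∀ θ ∈ Θ, 1 ≤ k θ)
    (hfac : ∀ z : ℂ, z ≠ 0 →
      (h.sum fun α v => v * z ^ α) = C * z ^ m * ∏ θ ∈ Θ, (z - θ⁻¹) ^ k θ) :
    ∀ c : ℤ → ℂ,
      ((∀ n : ℤ, conv1 h c n = 0) ↔
        ∃ p : ℂ → Polynomial ℂ,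
          (∀ θ ∈ Θ, (p θ).natDegree ≤ k θ - 1) ∧
          ∀ n : ℤ, c n = ∑ θ ∈ Θ, (p θ).eval (n : ℂ) * θ ^ n) ∧
      ∀ p p' : ℂ → Polynomial ℂ,
        (∀ θ ∈ Θ, (p θ).natDegree ≤ k θ - 1) →
        (∀ θ ∈ Θ, (p' θ).natDegree ≤ k θ - 1) →
        (∀ n : ℤ,
          (∑ θ ∈ Θ, (p θ).eval (n : ℂ) * θ ^ n) = ∑ θ ∈ Θ, (p' θ).eval (n : ℂ) * θ ^ n) →
        ∀ θ ∈ Θ, p θ = p' θ :=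
  stmt0_general h C hC m Θ hΘ k hk hfac
end

section
/- Let Q be a finite-dimensional subspace of Π = ℝ[z_1,…,z_s]. Then Q is D-invariant if and only if its orthogonal complement Q^⊥ := {f ∈ Π : (q,f) = 0 for all q ∈ Q} with respect to the Bombieri bilinear form is an ideal of Π. -/
open MvPolynomial

/-- The formal differential operator `∂^{|β|}/∂z^β` applied to a multivariate polynomial. -/
noncomputable def DOp {s : ℕ} (β : Fin s →₀ ℕ) (f : MvPolynomial (Fin s) ℝ) :
    MvPolynomial (Fin s) ℝ :=
  ∑ δ ∈ f.support,
    MvPolynomial.monomial (δ - β) (f.coeff δ * ∏ j, (Nat.descFactorial (δ j) (β j) : ℝ))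

/-- `q(D) f`: the constant coefficient differential operator associated with `q`, applied
to `f`. -/
noncomputable def polyD {s : ℕ} (q f : MvPolynomial (Fin s) ℝ) : MvPolynomial (Fin s) ℝ :=
  ∑ β ∈ q.support, q.coeff β • DOp β f

/-- A subspace `Q` is `D`-invariant if `q(D) p ∈ Q` for every `p ∈ Q` and every polynomial
`q`. -/
def DInvariant {s : ℕ} (Q : Submodule ℝ (MvPolynomial (Fin s) ℝ)) : Prop :=
  ∀ q : MvPolynomial (Fin s) ℝ, ∀ p ∈ Q, polyD q p ∈ Q

/-- The Bombieri (apolar) bilinear form `(f,g) = Σ_β β! f_β g_β`. -/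
noncomputable def bombieri {s : ℕ} (f g : MvPolynomial (Fin s) ℝ) : ℝ :=
  ∑ β ∈ f.support ∪ g.support,
    (∏ j, (Nat.factorial (β j) : ℝ)) * f.coeff β * g.coeff β

/-! The Bombieri form is symmetric and positive definite, and on monomials one checks
`(q(D) p, f) = (p, q f)`: differentiation is adjoint to multiplication. So `Q` is `D`-invariant
iff `Q^⊥` is closed under multiplication by polynomials, once we know `Q^⊥⊥ = Q`; this holds for
finite-dimensional `Q` because the form is nondegenerate on `Q`, so every functional
`(·, p)` on `Q` is represented by an element of `Q`. -/

namespace MvPolynomial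

variable {σ M : Type*} [AddCommMonoid M] [Module ℝ M]

theorem sum_support_coeff_add (L : (σ →₀ ℕ) → ℝ →ₗ[ℝ] M) (f g : MvPolynomial σ ℝ) :
    ∑ δ ∈ (f + g).support, L δ ((f + g).coeff δ) =
      ∑ δ ∈ f.support, L δ (f.coeff δ) + ∑ δ ∈ g.support, L δ (g.coeff δ) := by
  simp only [← sum_def, AddMonoidAlgebra.coeff_add]
  exact Finsupp.sum_add_index' (fun δ => map_zero _) (fun δ => map_add _)

theorem sum_support_coeff_smul (L : (σ →₀ ℕ) → ℝ →ₗ[ℝ] M) (c : ℝ) (f : MvPolynomial σ ℝ) :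
    ∑ δ ∈ (c • f).support, L δ ((c • f).coeff δ) = c • ∑ δ ∈ f.support, L δ (f.coeff δ) := by
  simp only [← sum_def, AddMonoidAlgebra.coeff_smul]
  rw [Finsupp.sum_smul_index' (fun δ => map_zero _), Finsupp.smul_sum]
  simp only [map_smul]

theorem sum_support_coeff_of_subset (L : (σ →₀ ℕ) → ℝ →ₗ[ℝ] M) {f : MvPolynomial σ ℝ}
    {S : Finset (σ →₀ ℕ)} (hS : f.support ⊆ S) :
    ∑ δ ∈ f.support, L δ (f.coeff δ) = ∑ δ ∈ S, L δ (f.coeff δ) :=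
  Finset.sum_subset hS fun δ _ hδ => by rw [notMem_support_iff.mp hδ, map_zero]

theorem sum_support_coeff_monomial (L : (σ →₀ ℕ) → ℝ →ₗ[ℝ] M) (α : σ →₀ ℕ) (a : ℝ) :
    ∑ δ ∈ (monomial α a).support, L δ ((monomial α a).coeff δ) = L α a := by
  classical
  rw [sum_support_coeff_of_subset L support_monomial_subset, Finset.sum_singleton,
    coeff_monomial, if_pos rfl]

end MvPolynomial

section

variable {s : ℕ}

theorem prod_factorial_sub_mul_prod_descFactorial {α β : Fin s →₀ ℕ} (h : β ≤ α) :
    (∏ j, ((α - β) j).factorial : ℝ) * ∏ j, ((α j).descFactorial (β j) : ℝ) =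
      ∏ j, ((α j).factorial : ℝ) := by
  rw [← Finset.prod_mul_distrib]
  refine Finset.prod_congr rfl fun j _ => ?_
  rw [Finsupp.tsub_apply, ← Nat.cast_mul, Nat.factorial_mul_descFactorial (h j)]

theorem prod_descFactorial_eq_zero {α β : Fin s →₀ ℕ} (h : ¬β ≤ α) :
    ∏ j, ((α j).descFactorial (β j) : ℝ) = 0 := by
  obtain ⟨j, hj⟩ : ∃ j, α j < β j := by simpa [Finsupp.le_def] using h
  exact Finset.prod_eq_zero (Finset.mem_univ j) (by simp [Nat.descFactorial_eq_zero_iff_lt.mpr hj])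

theorem bombieri_comm (f g : MvPolynomial (Fin s) ℝ) : bombieri f g = bombieri g f := by
  unfold bombieri
  rw [Finset.union_comm]
  exact Finset.sum_congr rfl fun β _ => by ring

theorem bombieri_eq_sum_support_left (f g : MvPolynomial (Fin s) ℝ) :
    bombieri f g = ∑ β ∈ f.support,
      LinearMap.mulRight ℝ ((∏ j, ((β j).factorial : ℝ)) * g.coeff β) (f.coeff β) := by
  rw [sum_support_coeff_of_subset _ Finset.subset_union_left]
  exact Finset.sum_congr rfl fun β _ => by rw [LinearMap.mulRight_apply]; ring

theorem bombieri_add_left (f f' g : MvPolynomial (Fin s) ℝ) :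
    bombieri (f + f') g = bombieri f g + bombieri f' g := by
  simp only [bombieri_eq_sum_support_left, sum_support_coeff_add]

theorem bombieri_smul_left (c : ℝ) (f g : MvPolynomial (Fin s) ℝ) :
    bombieri (c • f) g = c * bombieri f g := by
  simp only [bombieri_eq_sum_support_left, sum_support_coeff_smul, smul_eq_mul]

theorem bombieri_add_right (f g g' : MvPolynomial (Fin s) ℝ) :
    bombieri f (g + g') = bombieri f g + bombieri f g' := by
  simp only [bombieri_comm f, bombieri_add_left]

theorem bombieri_smul_right (c : ℝ) (f g : MvPolynomial (Fin s) ℝ) :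
    bombieri f (c • g) = c * bombieri f g := by
  simp only [bombieri_comm f, bombieri_smul_left]

theorem bombieri_monomial_left (α : Fin s →₀ ℕ) (a : ℝ) (g : MvPolynomial (Fin s) ℝ) :
    bombieri (monomial α a) g = a * ((∏ j, ((α j).factorial : ℝ)) * g.coeff α) := by
  rw [bombieri_eq_sum_support_left, sum_support_coeff_monomial, LinearMap.mulRight_apply]

theorem bombieri_self_pos {f : MvPolynomial (Fin s) ℝ} (hf : f ≠ 0) : 0 < bombieri f f := by
  rw [bombieri_eq_sum_support_left]
  refine Finset.sum_pos (fun β hβ => ?_) (support_nonempty.mpr hf)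
  have hweight : (0 : ℝ) < ∏ j, ((β j).factorial : ℝ) := by positivity
  have hsq : 0 < f.coeff β * f.coeff β := mul_self_pos.mpr (mem_support_iff.mp hβ)
  rw [LinearMap.mulRight_apply, mul_left_comm]
  exact mul_pos hweight hsq

theorem bombieri_self_eq_zero_iff {f : MvPolynomial (Fin s) ℝ} : bombieri f f = 0 ↔ f = 0 := by
  refine ⟨fun h => ?_, fun h => ?_⟩
  · by_contra hf
    exact (bombieri_self_pos hf).ne' h
  · rw [h, ← zero_smul ℝ 0, bombieri_smul_left, zero_mul]

variable (s) in
noncomputable def bombieriForm : LinearMap.BilinForm ℝ (MvPolynomial (Fin s) ℝ) :=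
  LinearMap.mk₂ ℝ bombieri bombieri_add_left bombieri_smul_left bombieri_add_right
    bombieri_smul_right

@[simp]
theorem bombieriForm_apply (f g : MvPolynomial (Fin s) ℝ) : bombieriForm s f g = bombieri f g :=
  rfl

theorem bombieriForm_isSymm : (bombieriForm s).IsSymm := ⟨bombieri_comm⟩

theorem bombieriForm_restrict_nondegenerate (W : Submodule ℝ (MvPolynomial (Fin s) ℝ)) :
    ((bombieriForm s).restrict W).Nondegenerate := by
  have hsep : ∀ x : W, (bombieriForm s).restrict W x x = 0 → x = 0 := fun x hx =>
    Subtype.ext (bombieri_self_eq_zero_iff.mp hx)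
  exact ⟨fun x hx => hsep x (hx x), fun y hy => hsep y (hy y)⟩

theorem bombieriForm_orthogonal_orthogonal (Q : Submodule ℝ (MvPolynomial (Fin s) ℝ))
    [FiniteDimensional ℝ Q] :
    (bombieriForm s).orthogonal ((bombieriForm s).orthogonal Q) = Q := by
  set B := bombieriForm s
  have hB : B.IsSymm := bombieriForm_isSymm
  refine le_antisymm (fun p hp => ?_) (LinearMap.BilinForm.le_orthogonal_orthogonal hB.isRefl)
  -- Riesz representation on `Q`: some `q₀ ∈ Q` pairs with `Q` exactly as `p` does.
  set q₀ : Q := ((B.restrict Q).toDual (bombieriForm_restrict_nondegenerate Q)).symm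
    ((B.flip p).domRestrict Q)
  have hq₀ : ∀ x ∈ Q, B q₀ x = B x p := fun x hx =>
    LinearMap.BilinForm.apply_toDual_symm_apply (B := B.restrict Q) _ ⟨x, hx⟩
  have hr : p - q₀ ∈ B.orthogonal Q := fun x hx => by
    rw [map_sub, ← hq₀ x hx, hB.eq, sub_self]
  have hrr : B (p - q₀) (p - q₀) = 0 := by
    rw [map_sub, hp _ hr, hB.eq (p - q₀), hr _ q₀.2, sub_self]
  have : p = q₀ := sub_eq_zero.mp (bombieri_self_eq_zero_iff.mp hrr)
  exact this ▸ q₀.2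

theorem DOp_add (β : Fin s →₀ ℕ) (f g : MvPolynomial (Fin s) ℝ) :
    DOp β (f + g) = DOp β f + DOp β g :=
  sum_support_coeff_add
    (fun δ => (monomial (δ - β)).comp
      (LinearMap.mulRight ℝ (∏ j, ((δ j).descFactorial (β j) : ℝ))))
    f g

theorem DOp_monomial (β α : Fin s →₀ ℕ) (a : ℝ) :
    DOp β (monomial α a) = monomial (α - β) (a * ∏ j, ((α j).descFactorial (β j) : ℝ)) :=
  sum_support_coeff_monomial
    (fun δ => (monomial (δ - β)).comp
      (LinearMap.mulRight ℝ (∏ j, ((δ j).descFactorial (β j) : ℝ))))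
    α a

theorem polyD_add_left (q q' f : MvPolynomial (Fin s) ℝ) :
    polyD (q + q') f = polyD q f + polyD q' f :=
  sum_support_coeff_add (fun β => LinearMap.toSpanSingleton ℝ _ (DOp β f)) q q'

theorem polyD_add_right (q f g : MvPolynomial (Fin s) ℝ) :
    polyD q (f + g) = polyD q f + polyD q g := by
  simp only [polyD, DOp_add, smul_add, Finset.sum_add_distrib]

theorem polyD_monomial_left (β : Fin s →₀ ℕ) (b : ℝ) (f : MvPolynomial (Fin s) ℝ) :
    polyD (monomial β b) f = b • DOp β f :=
  sum_support_coeff_monomial (fun β => LinearMap.toSpanSingleton ℝ _ (DOp β f)) β b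

theorem bombieri_polyD_monomial_monomial (β α : Fin s →₀ ℕ) (b a : ℝ)
    (f : MvPolynomial (Fin s) ℝ) :
    bombieri (polyD (monomial β b) (monomial α a)) f =
      bombieri (monomial α a) (monomial β b * f) := by
  rw [polyD_monomial_left, DOp_monomial, smul_monomial, bombieri_monomial_left,
    bombieri_monomial_left, coeff_monomial_mul']
  by_cases hβα : β ≤ α
  · rw [if_pos hβα, ← prod_factorial_sub_mul_prod_descFactorial hβα, smul_eq_mul]
    ring
  · rw [if_neg hβα, prod_descFactorial_eq_zero hβα]
    ring

theorem bombieri_polyD_left (q p f : MvPolynomial (Fin s) ℝ) :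
    bombieri (polyD q p) f = bombieri p (q * f) := by
  induction q using MvPolynomial.induction_on' with
  | add q q' hq hq' =>
    rw [polyD_add_left, bombieri_add_left, add_mul, bombieri_add_right, hq, hq']
  | monomial β b =>
    induction p using MvPolynomial.induction_on' with
    | add p p' hp hp' => rw [polyD_add_right, bombieri_add_left, bombieri_add_left, hp, hp']
    | monomial α a => exact bombieri_polyD_monomial_monomial β α b a f

end

/-- a finite-dimensional subspace `Q` of `ℝ[z_1,…,z_s]` is `D`-invariant if and
only if its orthogonal complement with respect to the Bombieri form is an ideal. -/
theorem stmt2 {s : ℕ} (Q : Submodule ℝ (MvPolynomial (Fin s) ℝ))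
    [FiniteDimensional ℝ Q] :
    DInvariant Q ↔
      ∃ I : Ideal (MvPolynomial (Fin s) ℝ),
        ∀ f : MvPolynomial (Fin s) ℝ, f ∈ I ↔ ∀ q ∈ Q, bombieri q f = 0 := by
  constructor
  · intro hQ
    refine ⟨{ (bombieriForm s).orthogonal Q with smul_mem' := fun q f hf p hp => ?_ },
      fun f => Iff.rfl⟩
    rw [smul_eq_mul, bombieriForm_apply, ← bombieri_polyD_left]
    exact hf _ (hQ q p hp)
  · rintro ⟨I, hI⟩ q p hp
    rw [← bombieriForm_orthogonal_orthogonal Q]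
    intro f hf
    rw [bombieriForm_apply, bombieri_comm, bombieri_polyD_left]
    exact (hI _).mp (I.mul_mem_left q ((hI f).mpr hf)) p hp
end

section
/- Let P be a finite-dimensional translation-invariant subspace of ℂ[x_1,…,x_s] with basis p_1,…,p_n. Then there exist unique polynomials g_{ij} ∈ ℂ[y_1,…,y_s] such that p_i(x+y) = Σ_{j=1}^n g_{ij}(y)·p_j(x) for all x, y ∈ ℂ^s, and the polynomial matrix G(y) = (g_{ij}(y)) satisfies det G(y) = 1 for all y ∈ ℂ^s. -/
/-!
The family `p` stays linearly independent as a family of functions, so there are points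
`a_1, …, a_n` at which the matrix `A = (p_j(a_k))` is invertible. Evaluating
`p_i(x + y) = Σ_j c_j(y) p_j(x)` at `x = a_k` gives `c(y) = A⁻¹ (p_i(a_k + y))_k`, which is
polynomial in `y`. Uniqueness of coefficients yields `G(0) = 1` and `G(y + z) = G(z) G(y)`, so
`det G` is a polynomial without zeros; by the Nullstellensatz it is constant, equal to
`det G(0) = 1`.
-/

open MvPolynomial Matrix

section PointEvaluation

variable {F α ι : Type*} [Field F] [Fintype ι]

theorem LinearIndependent.span_range_swap_eq_top {f : ι → α → F} (hf : LinearIndependent F f) :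
    Submodule.span F (Set.range (Function.swap f)) = ⊤ := by
  classical
  by_contra h
  obtain ⟨φ, hφ, hφspan⟩ := Submodule.exists_dual_map_eq_bot_of_lt_top (Ne.lt_top h) inferInstance
  -- a nonzero functional killing every `fun j => f j a` yields the relation `∑ φ(e_j) • f j = 0`
  have hvanish (a : α) : φ (fun j => f j a) = 0 := by
    rw [← Submodule.mem_bot F, ← hφspan]
    exact Submodule.mem_map_of_mem (Submodule.subset_span ⟨a, rfl⟩)
  have hcomb : ∑ j, φ (Pi.single j 1) • f j = 0 := funext fun a => by
    have hexpand := congrArg φ (pi_eq_sum_univ' fun j => f j a)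
    simpa [hvanish, mul_comm] using hexpand.symm
  exact hφ <| (Pi.basisFun F ι).ext fun j => by
    simpa using Fintype.linearIndependent_iff.mp hf _ hcomb j

theorem LinearIndependent.exists_isUnit_det [DecidableEq ι] {f : ι → α → F}
    (hf : LinearIndependent F f) : ∃ a : ι → α, IsUnit (of fun k j => f j (a k)).det := by
  obtain ⟨κ, a, -, hspan, hli⟩ := exists_linearIndependent' F (Function.swap f)
  rw [hf.span_range_swap_eq_top] at hspan
  let e : ι ≃ κ := (Pi.basisFun F ι).indexEquiv (Module.Basis.mk hli hspan.ge)
  refine ⟨a ∘ e, ?_⟩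
  rw [← Matrix.isUnit_iff_isUnit_det, ← Matrix.linearIndependent_rows_iff_isUnit]
  exact hli.comp e e.injective

end PointEvaluation

theorem Matrix.eq_inv_mulVec_of_forall_eq_sum {R α ι : Type*} [CommRing R] [Fintype ι]
    [DecidableEq ι] {f : ι → α → R} {a : ι → α} (ha : IsUnit (of fun k j => f j (a k)).det)
    {h : α → R} {c : ι → R} (hc : ∀ x, h x = ∑ j, c j * f j x) :
    c = (of fun k j => f j (a k))⁻¹ *ᵥ fun k => h (a k) := by
  have hA : (of fun k j => f j (a k)) *ᵥ c = fun k => h (a k) := by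
    ext k
    simp [mulVec, dotProduct, hc, mul_comm]
  rw [← hA, mulVec_mulVec, nonsing_inv_mul _ ha, one_mulVec]

namespace MvPolynomial

theorem eval_aeval_X_add_C {R σ : Type*} [CommRing R] (x y : σ → R) (q : MvPolynomial σ R) :
    eval x (aeval (fun j => X j + C (y j)) q) = eval (x + y) q := by
  rw [aeval_def, algebraMap_eq, ← eval_assoc]
  congr 2
  ext j
  simp

theorem eval_eq_of_forall_eval_ne_zero {K σ : Type*} [Field K] [IsAlgClosed K] [Finite σ]
    {q : MvPolynomial σ K} (hq : ∀ x, eval x q ≠ 0) (x y : σ → K) : eval x q = eval y q := by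
  have hspan : Ideal.span {q} = ⊤ := by
    have hempty : zeroLocus K (Ideal.span {q}) = ∅ :=
      Set.eq_empty_of_forall_notMem fun x hx => hq x (hx q (Ideal.mem_span_singleton_self q))
    rw [← Ideal.radical_eq_top, ← vanishingIdeal_zeroLocus_eq_radical (K := K), hempty,
      vanishingIdeal_empty]
  obtain ⟨r, -, rfl⟩ := isUnit_iff_eq_C_of_isReduced.mp (Ideal.span_singleton_eq_top.mp hspan)
  simp

end MvPolynomial

section Translation

variable {K σ ι : Type*} [Field K] [Fintype ι]

def IsTranslationMatrix (p : ι → MvPolynomial σ K) (g : ι → ι → MvPolynomial σ K) : Prop :=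
  ∀ (i : ι) (x y : σ → K), eval (x + y) (p i) = ∑ j, eval y (g i j) * eval x (p j)

theorem LinearIndependent.eq_of_forall_sum_mul_eval_eq [Infinite K] {p : ι → MvPolynomial σ K}
    (hp : LinearIndependent K p) {u v : ι → K}
    (h : ∀ x, ∑ j, u j * eval x (p j) = ∑ j, v j * eval x (p j)) : u = v :=
  funext <| Fintype.linearIndependent_iffₛ.mp hp u v <| MvPolynomial.funext fun x => by
    simpa [smul_eval] using h x

theorem LinearIndependent.mvPolynomial_eval [Infinite K] {p : ι → MvPolynomial σ K}
    (hp : LinearIndependent K p) : LinearIndependent K fun j (x : σ → K) => eval x (p j) :=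
  Fintype.linearIndependent_iffₛ.mpr fun u v h => congrFun <|
    hp.eq_of_forall_sum_mul_eval_eq fun x => by simpa using congrFun h x

theorem exists_isTranslationMatrix [Infinite K] {p : ι → MvPolynomial σ K}
    (hp : LinearIndependent K p)
    (hinv : ∀ i (y : σ → K),
      aeval (fun j => X j + C (y j)) (p i) ∈ Submodule.span K (Set.range p)) :
    ∃ g, IsTranslationMatrix p g := by
  classical
  obtain ⟨a, ha⟩ := hp.mvPolynomial_eval.exists_isUnit_det
  set A : Matrix ι ι K := of fun k j => eval (a k) (p j)
  refine ⟨fun i j => ∑ k, C (A⁻¹ j k) * aeval (fun l => X l + C (a k l)) (p i), fun i x y => ?_⟩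
  obtain ⟨c, hc⟩ := (Submodule.mem_span_range_iff_exists_fun K).mp (hinv i y)
  have hcx (x : σ → K) : eval (x + y) (p i) = ∑ j, c j * eval x (p j) := by
    rw [← eval_aeval_X_add_C, ← hc]
    simp [smul_eval]
  rw [hcx x, Matrix.eq_inv_mulVec_of_forall_eq_sum ha hcx]
  simp only [mulVec, dotProduct, map_sum, map_mul, eval_C, eval_aeval_X_add_C, add_comm y]
  rfl

namespace IsTranslationMatrix

variable [Infinite K] {p : ι → MvPolynomial σ K} {g : ι → ι → MvPolynomial σ K}

theorem unique (hp : LinearIndependent K p) (hg : IsTranslationMatrix p g)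
    {g' : ι → ι → MvPolynomial σ K} (hg' : IsTranslationMatrix p g') : g' = g :=
  funext fun i => funext fun j => MvPolynomial.funext fun y => congrFun
    (hp.eq_of_forall_sum_mul_eval_eq fun x => (hg' i x y).symm.trans (hg i x y)) j

theorem eval_zero [DecidableEq ι] (hp : LinearIndependent K p) (hg : IsTranslationMatrix p g) :
    (of fun i j => eval 0 (g i j)) = 1 := by
  ext i j
  refine congrFun (hp.eq_of_forall_sum_mul_eval_eq fun x => ?_) j
  simp only [of_apply]
  rw [← hg i x 0, add_zero]
  simp [one_apply]

theorem eval_add (hp : LinearIndependent K p) (hg : IsTranslationMatrix p g) (y z : σ → K) :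
    (of fun i j => eval (y + z) (g i j)) =
      (of fun i j => eval z (g i j)) * of fun i j => eval y (g i j) := by
  ext i k
  refine congrFun (hp.eq_of_forall_sum_mul_eval_eq fun x => ?_) k
  calc ∑ k, eval (y + z) (g i k) * eval x (p k)
      = eval ((x + y) + z) (p i) := by rw [← hg i x (y + z), add_assoc]
    _ = ∑ j, eval z (g i j) * ∑ k, eval y (g j k) * eval x (p k) := by
        simp only [hg i (x + y) z, hg _ x y]
    _ = ∑ k, ((of fun i j => eval z (g i j)) * of fun i j => eval y (g i j)) i k *
          eval x (p k) := by
        simp only [mul_apply, of_apply, Finset.mul_sum, Finset.sum_mul, mul_assoc]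
        exact Finset.sum_comm

theorem det_eval_ne_zero [DecidableEq ι] (hp : LinearIndependent K p)
    (hg : IsTranslationMatrix p g) (y : σ → K) : (of fun i j => eval y (g i j)).det ≠ 0 := by
  refine right_ne_zero_of_mul_eq_one (a := (of fun i j => eval (-y) (g i j)).det) ?_
  rw [← det_mul, ← hg.eval_add hp, add_neg_cancel, hg.eval_zero hp, det_one]

theorem det_eval_eq_one [IsAlgClosed K] [Finite σ] [DecidableEq ι] (hp : LinearIndependent K p)
    (hg : IsTranslationMatrix p g) (y : σ → K) : (of fun i j => eval y (g i j)).det = 1 := by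
  have hdet (w : σ → K) : eval w (of g).det = (of fun i j => eval w (g i j)).det :=
    RingHom.map_det (eval w) (of g)
  have hne (w : σ → K) : eval w (of g).det ≠ 0 := hdet w ▸ hg.det_eval_ne_zero hp w
  rw [← hdet, eval_eq_of_forall_eval_ne_zero hne y 0, hdet, hg.eval_zero hp, det_one]

end IsTranslationMatrix

end Translation

/-- if `p_1,…,p_n` is a basis of a translation-invariant subspace of
`ℂ[x_1,…,x_s]`, then there are unique polynomials `g_{ij}` with
`p_i(x+y) = Σ_j g_{ij}(y)·p_j(x)`, and `det G(y) = 1` for all `y`. -/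
theorem stmt8 {s n : ℕ} (p : Fin n → MvPolynomial (Fin s) ℂ)
    (hind : LinearIndependent ℂ p)
    (hinv : ∀ f ∈ Submodule.span ℂ (Set.range p), ∀ y : Fin s → ℂ,
      MvPolynomial.aeval (fun j => MvPolynomial.X j + MvPolynomial.C (y j)) f
        ∈ Submodule.span ℂ (Set.range p)) :
    ∃ g : Fin n → Fin n → MvPolynomial (Fin s) ℂ,
      (∀ (i : Fin n) (x y : Fin s → ℂ),
        MvPolynomial.eval (x + y) (p i)
          = ∑ j, MvPolynomial.eval y (g i j) * MvPolynomial.eval x (p j)) ∧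
      (∀ g' : Fin n → Fin n → MvPolynomial (Fin s) ℂ,
        (∀ (i : Fin n) (x y : Fin s → ℂ),
          MvPolynomial.eval (x + y) (p i)
            = ∑ j, MvPolynomial.eval y (g' i j) * MvPolynomial.eval x (p j)) → g' = g) ∧
      (∀ y : Fin s → ℂ,
        Matrix.det (Matrix.of fun i j => MvPolynomial.eval y (g i j)) = 1) := by
  obtain ⟨g, hg⟩ := exists_isTranslationMatrix hind fun i =>
    hinv (p i) (Submodule.subset_span ⟨i, rfl⟩)
  exact ⟨g, hg, fun g' hg' => hg.unique hind hg', hg.det_eval_eq_one hind⟩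
end

section
/- Let Ξ ∈ ℤ^{s×s} be an expanding integer matrix and a : ℤ^s → ℂ finitely supported. Then ζ ∈ (ℂ∖{0})^s is a symmetric zero of a* if and only if ζ^Ξ is a common zero of all subsymbols, i.e. a_ξ*(ζ^Ξ) = 0 for every ξ ∈ E_Ξ. -/
open scoped Matrix

/-- The set `E_Ξ = Ξ[0,1)^s ∩ ℤ^s` of coset representatives of `ℤ^s / Ξℤ^s`. -/
def EXi {s : ℕ} (Ξ : Matrix (Fin s) (Fin s) ℤ) : Set (Fin s → ℤ) :=
  {ξ | ∃ t : Fin s → ℝ, (∀ j, 0 ≤ t j ∧ t j < 1) ∧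
    (fun j => (ξ j : ℝ)) = (Ξ.map (Int.cast : ℤ → ℝ)).mulVec t}

/-- A matrix `Ξ ∈ ℤ^{s×s}` is expanding if all its complex eigenvalues have modulus
greater than one. -/
def Expanding {s : ℕ} (Ξ : Matrix (Fin s) (Fin s) ℤ) : Prop :=
  ∀ μ : ℂ, (Matrix.charpoly (Ξ.map (Int.cast : ℤ → ℂ))).IsRoot μ → 1 < ‖μ‖

/-- The subdivision operator `(S_a c)(α) = Σ_β a(α − Ξβ) c(β)`. -/
noncomputable def subdiv {s : ℕ} (Ξ : Matrix (Fin s) (Fin s) ℤ)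
    (a : (Fin s → ℤ) →₀ ℂ) (c : (Fin s → ℤ) → ℂ) (α : Fin s → ℤ) : ℂ :=
  ∑ᶠ β : Fin s → ℤ, a (α - Ξ.mulVec β) * c β

/-- Convolution `(h*c)(α) = Σ_β h(β) c(α−β)` for a (finitely supported) sequence `h`. -/
noncomputable def convF {s : ℕ} (h c : (Fin s → ℤ) → ℂ) (α : Fin s → ℤ) : ℂ :=
  ∑ᶠ β : Fin s → ℤ, h β * c (α - β)

/-- `z^Ξ = (z^{ξ_1},…,z^{ξ_s})`, `ξ_j` the columns of `Ξ`. -/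
noncomputable def powXi {s : ℕ} (Ξ : Matrix (Fin s) (Fin s) ℤ) (z : Fin s → ℂ) :
    Fin s → ℂ :=
  fun j => ∏ i, z i ^ Ξ i j

/-- The vector `e^{−2πiΞ^{−T}ξ'}`. -/
noncomputable def rootvec {s : ℕ} (Ξ : Matrix (Fin s) (Fin s) ℤ) (ξ' : Fin s → ℤ) :
    Fin s → ℂ :=
  fun j => Complex.exp (-2 * (Real.pi : ℂ) * Complex.I *
    ((((Ξ.map (Int.cast : ℤ → ℝ)).transpose⁻¹.mulVec fun i => (ξ' i : ℝ)) j : ℝ)))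

/-- The symbol `a*(z) = Σ_α a(α) z^α` as a function on `(ℂ∖{0})^s`. -/
noncomputable def astar {s : ℕ} (a : (Fin s → ℤ) →₀ ℂ) (z : Fin s → ℂ) : ℂ :=
  a.sum fun α v => v * ∏ j, z j ^ α j

/-- The subsymbol `a_ξ*(z) = Σ_γ a(ξ + Ξγ) z^γ` as a function on `(ℂ∖{0})^s`. -/
noncomputable def asubF {s : ℕ} (Ξ : Matrix (Fin s) (Fin s) ℤ)
    (a : (Fin s → ℤ) →₀ ℂ) (ξ : Fin s → ℤ) (z : Fin s → ℂ) : ℂ :=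
  ∑ᶠ γ : Fin s → ℤ, a (ξ + Ξ.mulVec γ) * ∏ j, z j ^ γ j

/-- The exponential sequence `e_θ(α) = θ^α`. -/
noncomputable def eSeq {s : ℕ} (θ : Fin s → ℂ) (α : Fin s → ℤ) : ℂ :=
  ∏ j, θ j ^ α j

/-- The partial derivative `∂/∂z_j` of a function `(Fin s → ℂ) → ℂ`. -/
noncomputable def pd {s : ℕ} (j : Fin s) (f : (Fin s → ℂ) → ℂ) : (Fin s → ℂ) → ℂ :=
  fun z => fderiv ℂ f z (Pi.single j 1)

/-- The iterated partial derivative `∂^{|β|}/∂z^β` of a function `(Fin s → ℂ) → ℂ`. -/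
noncomputable def pdMulti {s : ℕ} (β : Fin s → ℕ) (f : (Fin s → ℂ) → ℂ) :
    (Fin s → ℂ) → ℂ :=
  (List.ofFn fun j => (pd j)^[β j]).foldr (· ∘ ·) id f

/-!
Writing `α = ξ + Ξγ` with `ξ ∈ E_Ξ` splits the symbol as `a*(z) = Σ_{ξ ∈ E_Ξ} z^ξ a_ξ*(z^Ξ)`.
For `ω = e^{−2πiΞ^{−T}ξ'}` one has `ω^Ξ = 1`, and `ξ ↦ ω^ξ` is a character of `ℤ^s / Ξℤ^s`;
hence the values `a*(ω ζ)`, `ξ' ∈ E'_Ξ`, form the finite Fourier transform of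
`ξ ↦ ζ^ξ a_ξ*(ζ^Ξ)`, which is injective by orthogonality of characters.
-/

section Lattice

variable {s : ℕ} {M : Matrix (Fin s) (Fin s) ℤ}

noncomputable def coord (M : Matrix (Fin s) (Fin s) ℤ) (α : Fin s → ℤ) : Fin s → ℝ :=
  (M.map (Int.cast : ℤ → ℝ))⁻¹ *ᵥ fun i => (α i : ℝ)

noncomputable def floorCoord (M : Matrix (Fin s) (Fin s) ℤ) (α : Fin s → ℤ) : Fin s → ℤ :=
  fun j => ⌊coord M α j⌋

noncomputable def reduceMod (M : Matrix (Fin s) (Fin s) ℤ) (α : Fin s → ℤ) : Fin s → ℤ :=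
  α - M *ᵥ floorCoord M α

lemma isUnit_det_map_intCast (hM : M.det ≠ 0) : IsUnit (M.map (Int.cast : ℤ → ℝ)).det := by
  rw [isUnit_iff_ne_zero, ← Int.cast_det]
  exact_mod_cast hM

lemma intCast_mulVec (γ : Fin s → ℤ) :
    (fun i => ((M *ᵥ γ) i : ℝ)) = M.map (Int.cast : ℤ → ℝ) *ᵥ fun i => (γ i : ℝ) := by
  funext i
  simp [Matrix.mulVec, dotProduct]

lemma coord_add (α β : Fin s → ℤ) : coord M (α + β) = coord M α + coord M β := by
  rw [coord, coord, coord, ← Matrix.mulVec_add]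
  congr 1
  funext i
  simp

lemma coord_mulVec (hM : M.det ≠ 0) (γ : Fin s → ℤ) :
    coord M (M *ᵥ γ) = fun i => (γ i : ℝ) := by
  rw [coord, intCast_mulVec, Matrix.mulVec_mulVec,
    Matrix.nonsing_inv_mul _ (isUnit_det_map_intCast hM), Matrix.one_mulVec]

lemma mulVec_coord (hM : M.det ≠ 0) (α : Fin s → ℤ) :
    M.map (Int.cast : ℤ → ℝ) *ᵥ coord M α = fun i => (α i : ℝ) := by
  rw [coord, Matrix.mulVec_mulVec, Matrix.mul_nonsing_inv _ (isUnit_det_map_intCast hM),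
    Matrix.one_mulVec]

lemma coord_injective (hM : M.det ≠ 0) : Function.Injective (coord M) := by
  intro α β h
  have hcast := mulVec_coord hM α
  rw [h, mulVec_coord hM β] at hcast
  funext i
  exact_mod_cast (congrFun hcast i).symm

lemma mem_EXi_iff_floorCoord_eq_zero (hM : M.det ≠ 0) {ξ : Fin s → ℤ} :
    ξ ∈ EXi M ↔ floorCoord M ξ = 0 := by
  simp only [funext_iff, floorCoord, Pi.zero_apply, Int.floor_eq_zero_iff, Set.mem_Ico]
  constructor
  · rintro ⟨t, ht, hξ⟩
    have : coord M ξ = t := by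
      rw [coord, hξ, Matrix.mulVec_mulVec,
        Matrix.nonsing_inv_mul _ (isUnit_det_map_intCast hM), Matrix.one_mulVec]
    rwa [this]
  · exact fun h => ⟨coord M ξ, h, (mulVec_coord hM ξ).symm⟩

lemma floorCoord_add_mulVec (hM : M.det ≠ 0) (α γ : Fin s → ℤ) :
    floorCoord M (α + M *ᵥ γ) = floorCoord M α + γ := by
  funext j
  simp [floorCoord, coord_add, coord_mulVec hM]

lemma reduceMod_add_mulVec (hM : M.det ≠ 0) (α γ : Fin s → ℤ) :
    reduceMod M (α + M *ᵥ γ) = reduceMod M α := by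
  rw [reduceMod, reduceMod, floorCoord_add_mulVec hM, Matrix.mulVec_add]
  abel

lemma reduceMod_add_mulVec_floorCoord (α : Fin s → ℤ) :
    reduceMod M α + M *ᵥ floorCoord M α = α :=
  sub_add_cancel _ _

lemma reduceMod_mem_EXi (hM : M.det ≠ 0) (α : Fin s → ℤ) : reduceMod M α ∈ EXi M := by
  rw [mem_EXi_iff_floorCoord_eq_zero hM, reduceMod, sub_eq_add_neg, ← Matrix.mulVec_neg,
    floorCoord_add_mulVec hM, add_neg_cancel]

lemma reduceMod_of_mem_EXi (hM : M.det ≠ 0) {ξ : Fin s → ℤ} (hξ : ξ ∈ EXi M) :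
    reduceMod M ξ = ξ := by
  rw [reduceMod, (mem_EXi_iff_floorCoord_eq_zero hM).1 hξ, Matrix.mulVec_zero, sub_zero]

noncomputable def cosetEquiv (hM : M.det ≠ 0) : EXi M × (Fin s → ℤ) ≃ (Fin s → ℤ) where
  toFun p := p.1 + M *ᵥ p.2
  invFun α := (⟨reduceMod M α, reduceMod_mem_EXi hM α⟩, floorCoord M α)
  left_inv := by
    rintro ⟨⟨ξ, hξ⟩, γ⟩
    simp only [Prod.mk.injEq, Subtype.mk.injEq]
    refine ⟨by rw [reduceMod_add_mulVec hM, reduceMod_of_mem_EXi hM hξ], ?_⟩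
    rw [floorCoord_add_mulVec hM, (mem_EXi_iff_floorCoord_eq_zero hM).1 hξ, zero_add]
  right_inv := reduceMod_add_mulVec_floorCoord

lemma eq_of_sub_eq_mulVec (hM : M.det ≠ 0) {ξ η : EXi M} {γ : Fin s → ℤ}
    (h : (ξ : Fin s → ℤ) - η = M *ᵥ γ) : ξ = η := by
  have : cosetEquiv hM (ξ, 0) = cosetEquiv hM (η, γ) := by
    change (ξ : Fin s → ℤ) + M *ᵥ 0 = η + M *ᵥ γ
    rw [Matrix.mulVec_zero, add_zero, ← h, add_sub_cancel]
  exact congrArg Prod.fst ((cosetEquiv hM).injective this)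

noncomputable def translateEquiv (hM : M.det ≠ 0) (η : Fin s → ℤ) : EXi M ≃ EXi M where
  toFun ξ := ⟨reduceMod M (ξ + η), reduceMod_mem_EXi hM _⟩
  invFun ξ := ⟨reduceMod M (ξ - η), reduceMod_mem_EXi hM _⟩
  left_inv := by
    rintro ⟨ξ, hξ⟩
    ext1
    have : reduceMod M (ξ + η) - η = ξ + M *ᵥ -floorCoord M (ξ + η) := by
      rw [reduceMod, Matrix.mulVec_neg]; abel
    simp only [this, reduceMod_add_mulVec hM, reduceMod_of_mem_EXi hM hξ]
  right_inv := by
    rintro ⟨ξ, hξ⟩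
    ext1
    have : reduceMod M (ξ - η) + η = ξ + M *ᵥ -floorCoord M (ξ - η) := by
      rw [reduceMod, Matrix.mulVec_neg]; abel
    simp only [this, reduceMod_add_mulVec hM, reduceMod_of_mem_EXi hM hξ]

lemma finite_EXi (M : Matrix (Fin s) (Fin s) ℤ) : (EXi M).Finite := by
  refine (Set.finite_Icc (-fun j => ∑ i, |M j i|) fun j => ∑ i, |M j i|).subset ?_
  rintro ξ ⟨t, ht, hξ⟩
  have hbound : ∀ j, |ξ j| ≤ ∑ i, |M j i| := by
    intro j
    have hξj : (ξ j : ℝ) = ∑ i, (M j i : ℝ) * t i := by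
      simpa [Matrix.mulVec, dotProduct] using congrFun hξ j
    have : |(ξ j : ℝ)| ≤ ∑ i, |(M j i : ℝ)| := by
      rw [hξj]
      refine (Finset.abs_sum_le_sum_abs _ _).trans (Finset.sum_le_sum fun i _ => ?_)
      rw [abs_mul, abs_of_nonneg (ht i).1]
      exact mul_le_of_le_one_right (abs_nonneg _) (ht i).2.le
    exact_mod_cast this
  exact ⟨fun j => neg_le_of_abs_le (hbound j), fun j => le_of_abs_le (hbound j)⟩

noncomputable instance (M : Matrix (Fin s) (Fin s) ℤ) : Fintype (EXi M) :=
  (finite_EXi M).fintype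

instance (M : Matrix (Fin s) (Fin s) ℤ) : Nonempty (EXi M) :=
  ⟨⟨0, 0, fun _ => ⟨le_rfl, zero_lt_one⟩, by ext; simp⟩⟩

lemma sum_EXi_add_of_periodic (hM : M.det ≠ 0) {R : Type*} [AddCommMonoid R]
    {f : (Fin s → ℤ) → R} (hf : ∀ α γ, f (α + M *ᵥ γ) = f α) (η : Fin s → ℤ) :
    ∑ ξ : EXi M, f (ξ + η) = ∑ ξ : EXi M, f ξ := by
  have hred : ∀ α, f (reduceMod M α) = f α := fun α => by
    rw [← hf (reduceMod M α) (floorCoord M α), reduceMod_add_mulVec_floorCoord]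
  simp_rw [← hred (_ + η)]
  exact (translateEquiv hM η).sum_comp fun ξ => f ξ

end Lattice

section ExponentialSequences

lemma zpow_sum₀ {G₀ ι : Type*} [CommGroupWithZero G₀] {x : G₀} (hx : x ≠ 0) (t : Finset ι)
    (f : ι → ℤ) : x ^ (∑ i ∈ t, f i) = ∏ i ∈ t, x ^ f i := by
  induction t using Finset.cons_induction with
  | empty => simp
  | cons i t hi ih => rw [Finset.sum_cons, Finset.prod_cons, zpow_add₀ hx, ih]

variable {s : ℕ} {z w : Fin s → ℂ}

lemma eSeq_ne_zero (hz : ∀ j, z j ≠ 0) (α : Fin s → ℤ) : eSeq z α ≠ 0 :=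
  Finset.prod_ne_zero_iff.2 fun j _ => zpow_ne_zero _ (hz j)

lemma eSeq_add (hz : ∀ j, z j ≠ 0) (α β : Fin s → ℤ) :
    eSeq z (α + β) = eSeq z α * eSeq z β := by
  simp only [eSeq, Pi.add_apply, zpow_add₀ (hz _), Finset.prod_mul_distrib]

lemma eSeq_mul (α : Fin s → ℤ) : eSeq (z * w) α = eSeq z α * eSeq w α := by
  simp only [eSeq, Pi.mul_apply, mul_zpow, Finset.prod_mul_distrib]

lemma eSeq_exp (c : Fin s → ℂ) (α : Fin s → ℤ) :
    eSeq (fun i => Complex.exp (c i)) α = Complex.exp (∑ i, α i * c i) := by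
  simp only [eSeq, ← Complex.exp_int_mul, Complex.exp_sum]

lemma powXi_apply (M : Matrix (Fin s) (Fin s) ℤ) (z : Fin s → ℂ) (j : Fin s) :
    powXi M z j = eSeq z (fun i => M i j) :=
  rfl

lemma powXi_mul (M : Matrix (Fin s) (Fin s) ℤ) : powXi M (z * w) = powXi M z * powXi M w := by
  funext j
  simp only [powXi_apply, eSeq_mul, Pi.mul_apply]

lemma eSeq_mulVec (hz : ∀ j, z j ≠ 0) (M : Matrix (Fin s) (Fin s) ℤ) (γ : Fin s → ℤ) :
    eSeq z (M *ᵥ γ) = eSeq (powXi M z) γ := by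
  simp only [eSeq, powXi, Matrix.mulVec, dotProduct, ← Finset.prod_zpow, ← zpow_mul]
  rw [Finset.prod_comm]
  refine Finset.prod_congr rfl fun i _ => ?_
  exact zpow_sum₀ (hz i) _ _

end ExponentialSequences

section Characters

variable {s : ℕ} {M : Matrix (Fin s) (Fin s) ℤ}

lemma exp_neg_two_pi_I_mul_eq_one_iff (t : ℝ) :
    Complex.exp (-2 * Real.pi * Complex.I * t) = 1 ↔ ∃ n : ℤ, t = n := by
  have h2πI : 2 * (Real.pi : ℂ) * Complex.I ≠ 0 := by simp [Real.pi_ne_zero]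
  rw [Complex.exp_eq_one_iff]
  constructor
  · rintro ⟨n, hn⟩
    have ht : (t : ℂ) * (2 * Real.pi * Complex.I) = ((-n : ℤ) : ℂ) * (2 * Real.pi * Complex.I) := by
      push_cast
      linear_combination -hn
    exact ⟨-n, by exact_mod_cast mul_right_cancel₀ h2πI ht⟩
  · rintro ⟨n, rfl⟩
    exact ⟨-n, by push_cast; ring⟩

lemma rootvec_eq (M : Matrix (Fin s) (Fin s) ℤ) (x : Fin s → ℤ) :
    rootvec M x = fun i => Complex.exp (-2 * Real.pi * Complex.I * (coord Mᵀ x i : ℝ)) := by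
  unfold rootvec coord
  rw [Matrix.transpose_map]

lemma rootvec_ne_zero (M : Matrix (Fin s) (Fin s) ℤ) (x : Fin s → ℤ) (i : Fin s) :
    rootvec M x i ≠ 0 :=
  Complex.exp_ne_zero _

lemma rootvec_add (x y : Fin s → ℤ) : rootvec M (x + y) = rootvec M x * rootvec M y := by
  funext i
  simp only [rootvec_eq, coord_add, Pi.add_apply, Pi.mul_apply, ← Complex.exp_add]
  push_cast
  ring_nf

lemma rootvec_add_transpose_mulVec (hM : M.det ≠ 0) (x γ : Fin s → ℤ) :
    rootvec M (x + Mᵀ *ᵥ γ) = rootvec M x := by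
  have hMT : Mᵀ.det ≠ 0 := by rwa [Matrix.det_transpose]
  funext i
  simp only [rootvec_add, Pi.mul_apply, rootvec_eq M (Mᵀ *ᵥ γ), coord_mulVec hMT]
  rw [(exp_neg_two_pi_I_mul_eq_one_iff _).2 ⟨γ i, rfl⟩, mul_one]

lemma powXi_rootvec (hM : M.det ≠ 0) (x : Fin s → ℤ) : powXi M (rootvec M x) = 1 := by
  have hMT : Mᵀ.det ≠ 0 := by rwa [Matrix.det_transpose]
  funext j
  have hcol : ∑ i, (M i j : ℝ) * coord Mᵀ x i = x j := by
    simpa [Matrix.mulVec, dotProduct] using congrFun (mulVec_coord hMT x) j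
  rw [powXi_apply, rootvec_eq, eSeq_exp, Pi.one_apply, ← (exp_neg_two_pi_I_mul_eq_one_iff _).2
    ⟨x j, hcol⟩]
  push_cast
  rw [Finset.mul_sum]
  exact congrArg Complex.exp (Finset.sum_congr rfl fun i _ => by ring)

lemma eSeq_rootvec_single (M : Matrix (Fin s) (Fin s) ℤ) (j : Fin s) (δ : Fin s → ℤ) :
    eSeq (rootvec M (Pi.single j 1)) δ
      = Complex.exp (-2 * Real.pi * Complex.I * (coord M δ j : ℝ)) := by
  rw [rootvec_eq, eSeq_exp]
  simp only [coord, Matrix.transpose_map, ← Matrix.transpose_nonsing_inv, Matrix.mulVec,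
    dotProduct, Matrix.transpose_apply, Pi.single_apply, Int.cast_ite, Int.cast_one,
    Int.cast_zero, mul_ite, mul_one, mul_zero, Finset.sum_ite_eq', Finset.mem_univ, if_true]
  push_cast
  rw [Finset.mul_sum]
  exact congrArg Complex.exp (Finset.sum_congr rfl fun i _ => by ring)

end Characters

section Orthogonality

variable {s : ℕ} {M : Matrix (Fin s) (Fin s) ℤ}

/-- Translating the summation variable by `e_j` multiplies the sum by a root of unity `≠ 1`. -/
lemma sum_eSeq_rootvec_eq_zero (hM : M.det ≠ 0) {δ : Fin s → ℤ} {j : Fin s}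
    (hj : ∀ n : ℤ, coord M δ j ≠ n) :
    ∑ ξ' : EXi Mᵀ, eSeq (rootvec M ξ') δ = 0 := by
  have hMT : Mᵀ.det ≠ 0 := by rwa [Matrix.det_transpose]
  have hne : eSeq (rootvec M (Pi.single j 1)) δ ≠ 1 := by
    rw [eSeq_rootvec_single, Ne, exp_neg_two_pi_I_mul_eq_one_iff, not_exists]
    exact hj
  have hshift := sum_EXi_add_of_periodic hMT (f := fun x => eSeq (rootvec M x) δ)
    (fun x γ => by rw [rootvec_add_transpose_mulVec hM]) (Pi.single j 1)
  simp only [rootvec_add, eSeq_mul, ← Finset.sum_mul] at hshift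
  by_contra hS
  exact hne ((mul_eq_left₀ hS).1 hshift)

lemma sum_eSeq_rootvec_sub (hM : M.det ≠ 0) (ξ η : EXi M) :
    ∑ ξ' : EXi Mᵀ, eSeq (rootvec M ξ') (ξ - η)
      = if ξ = η then (Fintype.card (EXi Mᵀ) : ℂ) else 0 := by
  split_ifs with h
  · simp [h, eSeq]
  · obtain ⟨j, hj⟩ : ∃ j, ∀ n : ℤ, coord M (ξ - η) j ≠ n := by
      by_contra! hint
      choose γ hγ using hint
      refine h (eq_of_sub_eq_mulVec hM (γ := γ) (coord_injective hM ?_))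
      rw [coord_mulVec hM]
      exact funext hγ
    exact sum_eSeq_rootvec_eq_zero hM hj

lemma eq_zero_of_forall_sum_eSeq_rootvec_mul_eq_zero (hM : M.det ≠ 0) {c : EXi M → ℂ}
    (h : ∀ ξ' : EXi Mᵀ, ∑ ξ : EXi M, eSeq (rootvec M ξ') ξ * c ξ = 0) (η : EXi M) :
    c η = 0 := by
  have hinv : (Fintype.card (EXi Mᵀ) : ℂ) * c η
      = ∑ ξ' : EXi Mᵀ, eSeq (rootvec M ξ') (-η) * ∑ ξ : EXi M, eSeq (rootvec M ξ') ξ * c ξ := by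
    calc (Fintype.card (EXi Mᵀ) : ℂ) * c η
        = ∑ ξ : EXi M, (∑ ξ' : EXi Mᵀ, eSeq (rootvec M ξ') (ξ - η)) * c ξ := by
          simp [sum_eSeq_rootvec_sub hM]
      _ = _ := by
          simp only [Finset.mul_sum, Finset.sum_mul]
          rw [Finset.sum_comm]
          refine Finset.sum_congr rfl fun ξ' _ => Finset.sum_congr rfl fun ξ _ => ?_
          rw [sub_eq_add_neg, eSeq_add (rootvec_ne_zero M ξ')]
          ring
  have hcard : (Fintype.card (EXi Mᵀ) : ℂ) * c η = 0 := by
    simp only [hinv, h, mul_zero, Finset.sum_const_zero]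
  exact (mul_eq_zero.1 hcard).resolve_left (Nat.cast_ne_zero.2 Fintype.card_ne_zero)

end Orthogonality

section SymbolDecomposition

variable {s : ℕ} {M : Matrix (Fin s) (Fin s) ℤ}

lemma astar_eq_finsum (a : (Fin s → ℤ) →₀ ℂ) (z : Fin s → ℂ) :
    astar a z = ∑ᶠ α, a α * eSeq z α :=
  (finsum_eq_sum_of_support_subset _ fun _ hα => by simpa using left_ne_zero_of_mul hα).symm

lemma astar_eq_sum_EXi (hM : M.det ≠ 0) (a : (Fin s → ℤ) →₀ ℂ) {z : Fin s → ℂ}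
    (hz : ∀ j, z j ≠ 0) :
    astar a z = ∑ ξ : EXi M, eSeq z ξ * asubF M a ξ (powXi M z) := by
  have hfin : Function.HasFiniteSupport
      fun p => a (cosetEquiv hM p) * eSeq z (cosetEquiv hM p) :=
    (a.support.finite_toSet.preimage (cosetEquiv hM).injective.injOn).subset
      fun _ hp => by simpa using left_ne_zero_of_mul hp
  rw [astar_eq_finsum, ← finsum_comp_equiv (cosetEquiv hM), finsum_curry _ hfin,
    finsum_eq_sum_of_fintype]
  refine Finset.sum_congr rfl fun ξ _ => ?_
  rw [asubF, mul_finsum]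
  refine finsum_congr fun γ => ?_
  change a (ξ + M *ᵥ γ) * eSeq z (ξ + M *ᵥ γ) = eSeq z ξ * (a (ξ + M *ᵥ γ) * eSeq (powXi M z) γ)
  rw [eSeq_add hz, eSeq_mulVec hz]
  ring

lemma astar_rootvec_mul_eq_sum (hM : M.det ≠ 0) (a : (Fin s → ℤ) →₀ ℂ) {ζ : Fin s → ℂ}
    (hζ : ∀ j, ζ j ≠ 0) (ξ' : Fin s → ℤ) :
    astar a (rootvec M ξ' * ζ)
      = ∑ ξ : EXi M, eSeq (rootvec M ξ') ξ * (eSeq ζ ξ * asubF M a ξ (powXi M ζ)) := by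
  have hz : ∀ j, (rootvec M ξ' * ζ) j ≠ 0 := fun j => mul_ne_zero (rootvec_ne_zero M ξ' j) (hζ j)
  rw [astar_eq_sum_EXi hM a hz, powXi_mul, powXi_rootvec hM, one_mul]
  simp only [eSeq_mul, mul_assoc]

end SymbolDecomposition

lemma Expanding.det_ne_zero {s : ℕ} {M : Matrix (Fin s) (Fin s) ℤ} (h : Expanding M) :
    M.det ≠ 0 := by
  intro h0
  have hroot : (M.map (Int.cast : ℤ → ℂ)).charpoly.IsRoot 0 := by
    have hdet := Matrix.det_eq_sign_charpoly_coeff (M.map (Int.cast : ℤ → ℂ))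
    rw [← Int.cast_det, h0, Int.cast_zero, eq_comm, mul_eq_zero] at hdet
    rw [Polynomial.IsRoot, ← Polynomial.coeff_zero_eq_eval_zero]
    exact hdet.resolve_left (pow_ne_zero _ (by norm_num))
  exact absurd (h 0 hroot) (by simp)

/-- `ζ ∈ (ℂ∖{0})^s` is a symmetric zero of `a*` if and only if `ζ^Ξ` is a
common zero of all subsymbols `a_ξ*`, `ξ ∈ E_Ξ`. -/
theorem stmt15 {s : ℕ} (Ξ : Matrix (Fin s) (Fin s) ℤ) (hexp : Expanding Ξ)
    (a : (Fin s → ℤ) →₀ ℂ) (ζ : Fin s → ℂ) (hζ : ∀ j, ζ j ≠ 0) :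
    (∀ ξ' ∈ EXi Ξ.transpose, astar a (fun j => rootvec Ξ ξ' j * ζ j) = 0) ↔
      ∀ ξ ∈ EXi Ξ, asubF Ξ a ξ (powXi Ξ ζ) = 0 := by
  have hM := hexp.det_ne_zero
  have hsymbol := astar_rootvec_mul_eq_sum hM a hζ
  constructor
  · intro h ξ hξ
    have hc := eq_zero_of_forall_sum_eSeq_rootvec_mul_eq_zero hM
      (c := fun ξ => eSeq ζ ξ * asubF Ξ a ξ (powXi Ξ ζ))
      (fun ξ' => (hsymbol ξ').symm.trans (h ξ' ξ'.2)) ⟨ξ, hξ⟩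
    exact (mul_eq_zero.1 hc).resolve_left (eSeq_ne_zero hζ ξ)
  · intro h ξ' _
    rw [← Pi.mul_def, hsymbol]
    exact Finset.sum_eq_zero fun ξ _ => by rw [h ξ ξ.2, mul_zero, mul_zero]
end
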